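/- (Optimality of the compilation, finite form.) Let π* be a plan solving the compiled problem P_mod of minimum length among all plans solving P_mod. Then for every plan π that solves both the robot's problem P_R and the human's problem P_H, one has |len(π*) − c_H*| ≤ |len(π) − c_H*|, and consequently exp(|len(π*) − c_H*|) ≤ exp(|len(π) − c_H*|). -/
import Mathlib


/-- A STRIPS planning problem over fluents `F` and actions `A`. -/
structure Problem (F : Type) (A : Type) where
  pre : A → Set F
  add : A → Set F
  del : A → Set F
  I : Set F
  G : Set F

/-- Applying action `a` in state `s`. -/
def applyAct {F A : Type} (P : Problem F A) (s : Set F) (a : A) : Set F :=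
  (s ∪ P.add a) \ P.del a

/-- A plan is executable from a state iff each action's precondition holds
in the state obtained by applying the preceding actions. -/
def Executable {F A : Type} (P : Problem F A) : Set F → List A → Prop
  | _, [] => True
  | s, a :: rest => P.pre a ⊆ s ∧ Executable P (applyAct P s a) rest

/-- The resulting state of a plan from a state. -/
def result {F A : Type} (P : Problem F A) : Set F → List A → Set F
  | s, [] => s
  | s, a :: rest => result P (applyAct P s a) rest

/-- A plan solves a problem iff it is executable from the initial state and
its resulting state contains the goal. -/
def Solves {F A : Type} (P : Problem F A) (π : List A) : Prop :=
  Executable P P.I π ∧ P.G ⊆ result P P.I π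

/-- Tagged union of two states: `s_R ⊎ s_H ⊆ F ⊕ F`. -/
def tagUnion {F : Type} (sR sH : Set F) : Set (F ⊕ F) :=
  Sum.inl '' sR ∪ Sum.inr '' sH

/-- The compiled problem `P_mod` over `F ⊕ F`. -/
def compiled {F A : Type} (PR PH : Problem F A) : Problem (F ⊕ F) A where
  pre a := tagUnion (PR.pre a) (PH.pre a)
  add a := tagUnion (PR.add a) (PH.add a)
  del a := tagUnion (PR.del a) (PH.del a)
  I := tagUnion PR.I PH.I
  G := tagUnion PR.G PH.G


lemma tagUnion_subset_iff {F : Type} {a b c d : Set F} :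
    tagUnion a b ⊆ tagUnion c d ↔ a ⊆ c ∧ b ⊆ d := by
  constructor
  · intro h
    constructor
    · intro x hx
      have := h (Or.inl ⟨x, hx, rfl⟩)
      rcases this with ⟨y, hy, hyx⟩ | ⟨y, hy, hyx⟩
      · cases hyx; exact hy
      · cases hyx
    · intro x hx
      have := h (Or.inr ⟨x, hx, rfl⟩)
      rcases this with ⟨y, hy, hyx⟩ | ⟨y, hy, hyx⟩
      · cases hyx
      · cases hyx; exact hy
  · rintro ⟨h1, h2⟩ x hx
    rcases hx with ⟨y, hy, rfl⟩ | ⟨y, hy, rfl⟩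
    · exact Or.inl ⟨y, h1 hy, rfl⟩
    · exact Or.inr ⟨y, h2 hy, rfl⟩

lemma tagUnion_union {F : Type} (a b c d : Set F) :
    tagUnion a b ∪ tagUnion c d = tagUnion (a ∪ c) (b ∪ d) := by
  ext x
  cases x with
  | inl y => simp [tagUnion]
  | inr y => simp [tagUnion]

lemma tagUnion_diff {F : Type} (a b c d : Set F) :
    tagUnion a b \ tagUnion c d = tagUnion (a \ c) (b \ d) := by
  ext x
  cases x with
  | inl y => simp [tagUnion]
  | inr y => simp [tagUnion]

lemma applyAct_compiled {F A : Type} (PR PH : Problem F A) (sR sH : Set F) (a : A) :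
    applyAct (compiled PR PH) (tagUnion sR sH) a
      = tagUnion (applyAct PR sR a) (applyAct PH sH a) := by
  simp [applyAct, compiled, tagUnion_union, tagUnion_diff]

lemma result_compiled {F A : Type} (PR PH : Problem F A) (π : List A) :
    ∀ sR sH : Set F, result (compiled PR PH) (tagUnion sR sH) π
      = tagUnion (result PR sR π) (result PH sH π) := by
  induction π with
  | nil => intro sR sH; rfl
  | cons a rest ih =>
    intro sR sH
    simp only [result, applyAct_compiled]
    exact ih _ _

lemma executable_compiled {F A : Type} (PR PH : Problem F A) (π : List A) :
    ∀ sR sH : Set F, Executable (compiled PR PH) (tagUnion sR sH) π ↔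
      Executable PR sR π ∧ Executable PH sH π := by
  induction π with
  | nil => intro sR sH; simp [Executable]
  | cons a rest ih =>
    intro sR sH
    constructor
    · rintro ⟨hp, hrest⟩
      rw [applyAct_compiled] at hrest
      obtain ⟨h1, h2⟩ := (ih _ _).mp hrest
      obtain ⟨p1, p2⟩ := tagUnion_subset_iff.mp hp
      exact ⟨⟨p1, h1⟩, ⟨p2, h2⟩⟩
    · rintro ⟨⟨p1, h1⟩, ⟨p2, h2⟩⟩
      refine ⟨tagUnion_subset_iff.mpr ⟨p1, p2⟩, ?_⟩
      rw [applyAct_compiled]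
      exact (ih _ _).mpr ⟨h1, h2⟩

lemma solves_compiled_iff {F A : Type} (PR PH : Problem F A) (π : List A) :
    Solves (compiled PR PH) π ↔ Solves PR π ∧ Solves PH π := by
  simp only [Solves]
  have hI : (compiled PR PH).I = tagUnion PR.I PH.I := rfl
  have hG : (compiled PR PH).G = tagUnion PR.G PH.G := rfl
  rw [hI, hG, executable_compiled, result_compiled, tagUnion_subset_iff]
  tauto

theorem stmt_6 {F A : Type} (PR PH : Problem F A) (cH : ℕ)
    (hcH_att : ∃ π : List A, Solves PH π ∧ π.length = cH)
    (hcH_min : ∀ π : List A, Solves PH π → cH ≤ π.length)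
    (πs : List A) (hπs : Solves (compiled PR PH) πs)
    (hπs_min : ∀ π : List A, Solves (compiled PR PH) π → πs.length ≤ π.length)
    (π : List A) (hR : Solves PR π) (hH : Solves PH π) :
    |(πs.length : ℝ) - (cH : ℝ)| ≤ |(π.length : ℝ) - (cH : ℝ)| ∧
    Real.exp |(πs.length : ℝ) - (cH : ℝ)| ≤ Real.exp |(π.length : ℝ) - (cH : ℝ)| := by
  have hπmod : Solves (compiled PR PH) π := (solves_compiled_iff PR PH π).mpr ⟨hR, hH⟩
  have hπsH : Solves PH πs := ((solves_compiled_iff PR PH πs).mp hπs).2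
  have h1 : cH ≤ πs.length := hcH_min πs hπsH
  have h2 : πs.length ≤ π.length := hπs_min π hπmod
  have key : |(πs.length : ℝ) - (cH : ℝ)| ≤ |(π.length : ℝ) - (cH : ℝ)| := by
    rw [abs_of_nonneg (sub_nonneg.mpr (by exact_mod_cast h1)),
        abs_of_nonneg (sub_nonneg.mpr (by exact_mod_cast h1.trans h2))]
    have : (πs.length : ℝ) ≤ π.length := by exact_mod_cast h2
    linarith
  exact ⟨key, Real.exp_le_exp.mpr key⟩
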